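/- Let P be a finite rooted tree whose leaves include a distinguished set of fields, and let f be a field. Then the set of ancestors a of f (including f itself) whose subtree contains no field other than f is nonempty and totally ordered by the ancestor relation, hence has a greatest element a(f) (the highest such ancestor). Moreover, for every node t of P, t is a descendant of a(f) if and only if the least common ancestor of t and f has no field descendant other than f. -/

import Mathlib

/-!
Ancestors of a fixed node form a finite chain (the iterates of `parent`), so every nonempty
set of them has a highest and a lowest element. The field-free ancestors of `f` contain `f`
(a leaf) and are closed downwards along this chain; let `m` be the highest one. If `t` lies
below `m`, then `lca t f` lies between `f` and `m`, hence is field-free. Conversely, if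
`lca t f` is field-free it lies below `m`, and so does `t`.
-/

/-- A finite rooted tree: a finite set of nodes with a parent function defined on
all non-root nodes (the root is its own parent) such that iterating the parent
function from any node reaches the root. -/
structure FinRootedTree (V : Type*) [Fintype V] [DecidableEq V] where
  root : V
  parent : V → V
  parent_root : parent root = root
  reaches_root : ∀ v : V, ∃ n : ℕ, parent^[n] v = root

namespace FinRootedTree

variable {V : Type*} [Fintype V] [DecidableEq V]

/-- `a` is a (weak) ancestor of `v`, i.e. `v` is a descendant of `a`. -/
def Anc (T : FinRootedTree V) (a v : V) : Prop :=
  ∃ n : ℕ, T.parent^[n] v = a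

/-- `l` is the least (lowest) common ancestor of `t` and `f`: it is a common
ancestor, and every common ancestor of `t` and `f` is an ancestor of `l`. -/
def IsLCA (T : FinRootedTree V) (l t f : V) : Prop :=
  T.Anc l t ∧ T.Anc l f ∧ ∀ a : V, T.Anc a t → T.Anc a f → T.Anc a l

/-- The ancestors `a` of `f` (including `f` itself) whose subtree contains no
field other than `f`. -/
def FieldFreeAnc (T : FinRootedTree V) (fields : Finset V) (f : V) : Set V :=
  {a : V | T.Anc a f ∧ ∀ g ∈ fields, T.Anc a g → g = f}

end FinRootedTree

theorem Set.Finite.exists_forall_rel_of_total {α : Type*} {r : α → α → Prop} [IsTrans α r]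
    {s : Set α} (hfin : s.Finite) (hne : s.Nonempty)
    (htot : ∀ a ∈ s, ∀ b ∈ s, r a b ∨ r b a) : ∃ m ∈ s, ∀ a ∈ s, r a m := by
  have : Nonempty s := hne.to_subtype
  have : Fintype s := hfin.fintype
  have hdir : Directed r ((↑) : s → α) := fun a b =>
    (htot a a.2 b b.2).elim
      (fun hab => ⟨b, hab, (htot b b.2 b b.2).elim id id⟩)
      (fun hba => ⟨a, (htot a a.2 a a.2).elim id id, hba⟩)
  obtain ⟨m, hm⟩ := hdir.finset_le Finset.univ
  exact ⟨m, m.2, fun a ha => hm ⟨a, ha⟩ (Finset.mem_univ _)⟩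

namespace FinRootedTree

variable {V : Type*} [Fintype V] [DecidableEq V] (T : FinRootedTree V)

theorem anc_refl (v : V) : T.Anc v v := ⟨0, rfl⟩

theorem anc_trans {a b c : V} (hab : T.Anc a b) (hbc : T.Anc b c) : T.Anc a c := by
  obtain ⟨n, hn⟩ := hab
  obtain ⟨k, hk⟩ := hbc
  exact ⟨n + k, by rw [Function.iterate_add_apply, hk, hn]⟩

instance : IsTrans V T.Anc := ⟨fun _ _ _ => T.anc_trans⟩

theorem anc_root (v : V) : T.Anc T.root v := T.reaches_root v

theorem anc_total_of_anc {a b v : V} (ha : T.Anc a v) (hb : T.Anc b v) :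
    T.Anc a b ∨ T.Anc b a := by
  obtain ⟨n, rfl⟩ := ha
  obtain ⟨k, rfl⟩ := hb
  rcases le_total n k with h | h
  · exact Or.inr ⟨k - n, by rw [← Function.iterate_add_apply, Nat.sub_add_cancel h]⟩
  · exact Or.inl ⟨n - k, by rw [← Function.iterate_add_apply, Nat.sub_add_cancel h]⟩

theorem eq_of_anc_of_isLeaf {f v : V} (hleaf : ∀ c : V, T.parent c = f → c = f)
    (h : T.Anc f v) : v = f := by
  obtain ⟨n, hn⟩ := h
  induction n generalizing v with
  | zero => exact hn
  | succ n ih =>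
    rw [Function.iterate_succ_apply'] at hn
    exact ih (hleaf _ hn)

theorem exists_isLCA (t f : V) : ∃ l, T.IsLCA l t f := by
  obtain ⟨l, ⟨hlt, hlf⟩, hlow⟩ :=
    Set.Finite.exists_forall_rel_of_total (r := T.Anc) (s := {a | T.Anc a t ∧ T.Anc a f})
      (Set.toFinite _) ⟨T.root, T.anc_root t, T.anc_root f⟩
      (fun a ha b hb => T.anc_total_of_anc ha.1 hb.1)
  exact ⟨l, hlt, hlf, fun a hat haf => hlow a ⟨hat, haf⟩⟩

variable {fields : Finset V} {f : V}

theorem self_mem_fieldFreeAnc (hleaf : ∀ c : V, T.parent c = f → c = f) :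
    f ∈ T.FieldFreeAnc fields f :=
  ⟨T.anc_refl f, fun _ _ hanc => T.eq_of_anc_of_isLeaf hleaf hanc⟩

theorem mem_fieldFreeAnc_of_anc {a b : V} (ha : a ∈ T.FieldFreeAnc fields f)
    (hab : T.Anc a b) (hbf : T.Anc b f) : b ∈ T.FieldFreeAnc fields f :=
  ⟨hbf, fun g hg hbg => ha.2 g hg (T.anc_trans hab hbg)⟩

theorem exists_highest_fieldFreeAnc (hne : (T.FieldFreeAnc fields f).Nonempty) :
    ∃ m ∈ T.FieldFreeAnc fields f, ∀ a ∈ T.FieldFreeAnc fields f, T.Anc m a :=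
  Set.Finite.exists_forall_rel_of_total (r := Function.swap T.Anc) (Set.toFinite _) hne
    fun _ ha _ hb => T.anc_total_of_anc hb.1 ha.1

end FinRootedTree

/-- For a field `f` of a finite rooted tree whose fields are leaves: the set of
ancestors of `f` (including `f` itself) whose subtree contains no field other
than `f` is nonempty and totally ordered by the ancestor relation, hence has a
greatest (highest) element `m = a(f)`; moreover, a node `t` is a descendant of
`a(f)` if and only if the least common ancestor of `t` and `f` has no field
descendant other than `f`. -/
theorem field_scope_highest_ancestor
    {V : Type*} [Fintype V] [DecidableEq V] (T : FinRootedTree V)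
    (fields : Finset V)
    (hfieldsLeaf : ∀ f ∈ fields, ∀ c : V, T.parent c = f → c = f)
    (f : V) (hf : f ∈ fields) :
    (FinRootedTree.FieldFreeAnc T fields f).Nonempty ∧
    (∀ a ∈ FinRootedTree.FieldFreeAnc T fields f,
      ∀ b ∈ FinRootedTree.FieldFreeAnc T fields f, T.Anc a b ∨ T.Anc b a) ∧
    ∃ m ∈ FinRootedTree.FieldFreeAnc T fields f,
      (∀ a ∈ FinRootedTree.FieldFreeAnc T fields f, T.Anc m a) ∧
      ∀ t : V, T.Anc m t ↔
        ∃ l : V, T.IsLCA l t f ∧ ∀ g ∈ fields, T.Anc l g → g = f := by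
  have hne : (T.FieldFreeAnc fields f).Nonempty :=
    ⟨f, T.self_mem_fieldFreeAnc (hfieldsLeaf f hf)⟩
  obtain ⟨m, hm, hhighest⟩ := T.exists_highest_fieldFreeAnc hne
  refine ⟨hne, fun a ha b hb => T.anc_total_of_anc ha.1 hb.1, m, hm, hhighest, fun t => ?_⟩
  constructor
  · intro hmt
    obtain ⟨l, hl⟩ := T.exists_isLCA t f
    exact ⟨l, hl, (T.mem_fieldFreeAnc_of_anc hm (hl.2.2 m hmt hm.1) hl.2.1).2⟩
  · rintro ⟨l, hl, hfree⟩
    exact T.anc_trans (hhighest l ⟨hl.2.1, hfree⟩) hl.1
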